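/- Let n ≥ 3 and let S be a set of transpositions generating S_n such that the Cayley graph Cay(S_n, S) is normal (i.e., the image of the right regular representation is a normal subgroup of Aut(Cay(S_n, S))). Then the subgroup λ(Aut(T(S))) = { λ_a : a ∈ Aut(T(S)) } of Aut(Cay(S_n, S)), where λ_a : x ↦ a⁻¹ * x, is a normal subgroup of Aut(Cay(S_n, S)). -/

import Mathlib

open Equiv

/-- The Cayley graph of `Sₙ = Perm (Fin n)` with connection set `S`:
vertices `h, g` are adjacent iff `g * h⁻¹ ∈ S` (for a symmetric identity-free
set `S`, such as a set of transpositions, `fromRel` yields exactly this relation). -/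
def Cay (n : ℕ) (S : Set (Equiv.Perm (Fin n))) : SimpleGraph (Equiv.Perm (Fin n)) :=
  SimpleGraph.fromRel (fun h g => g * h⁻¹ ∈ S)

/-- The transposition graph `T(S)` of `S`: vertices `i, j ∈ Fin n` are adjacent
iff the transposition `swap i j ∈ S`. -/
def TransGraph (n : ℕ) (S : Set (Equiv.Perm (Fin n))) : SimpleGraph (Fin n) :=
  SimpleGraph.fromRel (fun i j => Equiv.swap i j ∈ S)

/-- The automorphism group of a graph, as a subgroup of the symmetric group on
its vertex set. -/
def graphAut {V : Type*} (G : SimpleGraph V) : Subgroup (Equiv.Perm V) where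
  carrier := {f | ∀ x y, G.Adj (f x) (f y) ↔ G.Adj x y}
  one_mem' := by intro x y; simp
  mul_mem' := by
    intro a b ha hb x y
    simp only [Equiv.Perm.mul_apply]
    rw [ha, hb]
  inv_mem' := by
    intro a ha x y
    rw [← ha (a⁻¹ x) (a⁻¹ y)]
    simp

/-- The image `R(Sₙ)` of the right regular representation of `Sₙ` inside `Sym(Sₙ)`:
all permutations of the form `x ↦ x * a`. -/
def Rrep (n : ℕ) : Subgroup (Equiv.Perm (Equiv.Perm (Fin n))) where
  carrier := {f | ∃ a : Equiv.Perm (Fin n), f = Equiv.mulRight a}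
  one_mem' := ⟨1, by ext x; simp⟩
  mul_mem' := by
    rintro _ _ ⟨a, rfl⟩ ⟨b, rfl⟩
    exact ⟨b * a, by ext x; simp [mul_assoc]⟩
  inv_mem' := by
    rintro _ ⟨a, rfl⟩
    exact ⟨a⁻¹, by ext x; simp⟩

/-- The image `λ(Sₙ)` of the left regular representation of `Sₙ` inside `Sym(Sₙ)`:
all permutations of the form `x ↦ b⁻¹ * x`. -/
def LrepAll (n : ℕ) : Subgroup (Equiv.Perm (Equiv.Perm (Fin n))) where
  carrier := {f | ∃ b : Equiv.Perm (Fin n), f = Equiv.mulLeft b⁻¹}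
  one_mem' := ⟨1, by ext x; simp⟩
  mul_mem' := by
    rintro _ _ ⟨a, rfl⟩ ⟨b, rfl⟩
    exact ⟨b * a, by ext x; simp [mul_assoc]⟩
  inv_mem' := by
    rintro _ ⟨a, rfl⟩
    exact ⟨a⁻¹, by ext x; simp⟩

/-- The subgroup `λ(Aut(T(S))) = { x ↦ a⁻¹ * x : a ∈ Aut(T(S)) }` of `Sym(Sₙ)`. -/
def Lrep (n : ℕ) (S : Set (Equiv.Perm (Fin n))) :
    Subgroup (Equiv.Perm (Equiv.Perm (Fin n))) where
  carrier := {f | ∃ a ∈ graphAut (TransGraph n S), f = Equiv.mulLeft a⁻¹}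
  one_mem' := ⟨1, one_mem _, by ext x; simp⟩
  mul_mem' := by
    rintro _ _ ⟨a, ha, rfl⟩ ⟨b, hb, rfl⟩
    exact ⟨b * a, mul_mem hb ha, by ext x; simp [mul_assoc]⟩
  inv_mem' := by
    rintro _ ⟨a, ha, rfl⟩
    exact ⟨a⁻¹, inv_mem ha, by ext x; simp⟩

/-!
If the right regular representation is normal in `Aut(Cay(Sₙ, S))`, every automorphism `F` of the
Cayley graph has the form `x ↦ φ x * F 1` with `φ` a group automorphism of `Sₙ`; as `F` preserves
adjacency to `1`, `φ` maps `S` onto `S`. Then `F λ_a F⁻¹ = λ_{φ a}`, and conjugation by `φ a`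
preserves `S` because conjugation by `a` does, i.e. `φ a ∈ Aut(T(S))`.
-/

namespace Equiv.Perm

variable {G : Type*} [Group G]

theorem exists_mulEquiv_of_conj_mulRight (f : Perm G)
    (hf : ∀ g, ∃ g', f * Equiv.mulRight g * f⁻¹ = Equiv.mulRight g') :
    ∃ φ : G ≃* G, ∀ x, f x = φ x * f 1 := by
  have hmul : ∀ x g, f (x * g) = f x * (f 1)⁻¹ * f g := by
    intro x g
    obtain ⟨g', hg'⟩ := hf g
    have hshift : ∀ y, f (y * g) = f y * g' := fun y => by
      simpa using congr($hg' (f y))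
    rw [hshift, ← one_mul g, hshift 1]
    group
  refine ⟨{ toEquiv := f.trans (Equiv.mulRight (f 1)⁻¹), map_mul' := fun x y => ?_ }, fun x => ?_⟩
  · change f (x * y) * (f 1)⁻¹ = f x * (f 1)⁻¹ * (f y * (f 1)⁻¹)
    rw [hmul]
    group
  · simp

theorem conj_mulLeft_inv {f : Perm G} {φ : G ≃* G} (hf : ∀ x, f x = φ x * f 1) (a : G) :
    f * Equiv.mulLeft a⁻¹ * f⁻¹ = Equiv.mulLeft (φ a)⁻¹ := by
  ext x
  simp only [Perm.mul_apply, coe_mulLeft]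
  rw [hf, map_mul, map_inv, mul_assoc, ← hf]
  simp

end Equiv.Perm

section CayleyGraph

variable {n : ℕ} {S : Set (Perm (Fin n))}

theorem cay_adj_iff (hinv : ∀ s ∈ S, s⁻¹ ∈ S) (hone : 1 ∉ S) {h g : Perm (Fin n)} :
    (Cay n S).Adj h g ↔ g * h⁻¹ ∈ S := by
  rw [Cay, SimpleGraph.fromRel_adj]
  refine ⟨?_, fun hgh => ⟨?_, Or.inl hgh⟩⟩
  · rintro ⟨-, hgh | hhg⟩
    · exact hgh
    · simpa using hinv _ hhg
  · rintro rfl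
    exact hone (by simpa using hgh)

theorem mulRight_mem_graphAut_cay (a : Perm (Fin n)) : Equiv.mulRight a ∈ graphAut (Cay n S) := by
  intro x y
  simp only [Cay, SimpleGraph.fromRel_adj, coe_mulRight, (mul_left_injective a).ne_iff,
    mul_inv_rev, mul_assoc, mul_inv_cancel_left]

theorem map_mem_iff_of_mem_graphAut_cay (hinv : ∀ s ∈ S, s⁻¹ ∈ S) (hone : 1 ∉ S)
    {f : Perm (Perm (Fin n))} (hf : f ∈ graphAut (Cay n S)) {φ : Perm (Fin n) ≃* Perm (Fin n)}
    (hφ : ∀ x, f x = φ x * f 1) (s : Perm (Fin n)) : φ s ∈ S ↔ s ∈ S := by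
  have h := hf 1 s
  rwa [cay_adj_iff hinv hone, cay_adj_iff hinv hone, hφ s, mul_inv_cancel_right, inv_one,
    mul_one] at h

end CayleyGraph

section TransGraph

variable {n : ℕ} {S : Set (Perm (Fin n))}

theorem mem_graphAut_transGraph_iff {a : Perm (Fin n)} :
    a ∈ graphAut (TransGraph n S) ↔ ∀ i j, swap (a i) (a j) ∈ S ↔ swap i j ∈ S := by
  have hadj : ∀ i j, (TransGraph n S).Adj i j ↔ i ≠ j ∧ swap i j ∈ S := fun i j => by
    rw [TransGraph, SimpleGraph.fromRel_adj, swap_comm j i, or_self]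
  refine ⟨fun ha i j => ?_, fun ha i j => ?_⟩
  · by_cases hij : i = j
    · simp [hij]
    · simpa [hadj, hij] using ha i j
  · rw [hadj, hadj, a.injective.ne_iff, ha]

theorem mem_graphAut_transGraph_iff_conj (hS : ∀ s ∈ S, s.IsSwap) {a : Perm (Fin n)} :
    a ∈ graphAut (TransGraph n S) ↔ ∀ s, a * s * a⁻¹ ∈ S ↔ s ∈ S := by
  simp only [mem_graphAut_transGraph_iff, swap_apply_apply]
  refine ⟨fun ha s => ⟨fun hs => ?_, fun hs => ?_⟩, fun ha i j => ha _⟩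
  · obtain ⟨i, j, -, hij⟩ := hS _ hs
    have hs' : s = swap (a⁻¹ i) (a⁻¹ j) := by
      rw [swap_apply_apply, ← hij]
      group
    rw [hs', ← ha, ← swap_apply_apply]
    simpa [hij] using hs
  · obtain ⟨i, j, -, rfl⟩ := hS s hs
    exact (ha i j).2 hs

theorem map_mem_graphAut_transGraph (hS : ∀ s ∈ S, s.IsSwap)
    {φ : Perm (Fin n) ≃* Perm (Fin n)} (hφ : ∀ s, φ s ∈ S ↔ s ∈ S) {a : Perm (Fin n)}
    (ha : a ∈ graphAut (TransGraph n S)) : φ a ∈ graphAut (TransGraph n S) := by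
  rw [mem_graphAut_transGraph_iff_conj hS] at ha ⊢
  intro s
  have hconj : φ a * s * (φ a)⁻¹ = φ (a * φ.symm s * a⁻¹) := by simp
  rw [hconj, hφ, ha, ← hφ, φ.apply_symm_apply]

end TransGraph

theorem lrep_normal_in_aut_cayley_general (n : ℕ) (S : Set (Equiv.Perm (Fin n)))
    (hS : ∀ s ∈ S, Equiv.Perm.IsSwap s)
    (hnormal : ((Rrep n).subgroupOf (graphAut (Cay n S))).Normal) :
    ((Lrep n S).subgroupOf (graphAut (Cay n S))).Normal := by
  have hinv : ∀ s ∈ S, s⁻¹ ∈ S := fun s hs => by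
    obtain ⟨i, j, -, rfl⟩ := hS s hs
    rwa [swap_inv]
  have hone : 1 ∉ S := fun h => (hS 1 h).isCycle.ne_one rfl
  refine ⟨fun u hu F => ?_⟩
  obtain ⟨a, ha, hu⟩ := Subgroup.mem_subgroupOf.1 hu
  obtain ⟨φ, hφ⟩ := Perm.exists_mulEquiv_of_conj_mulRight (F : Perm (Perm (Fin n))) fun g =>
    Subgroup.mem_subgroupOf.1 <|
      hnormal.conj_mem ⟨_, mulRight_mem_graphAut_cay g⟩ (Subgroup.mem_subgroupOf.2 ⟨g, rfl⟩) F
  have hφS := map_mem_iff_of_mem_graphAut_cay hinv hone F.2 hφ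
  refine Subgroup.mem_subgroupOf.2 ⟨φ a, map_mem_graphAut_transGraph hS hφS ha, ?_⟩
  simp only [Subgroup.coe_mul, Subgroup.coe_inv, hu]
  exact Perm.conj_mulLeft_inv hφ a

/-- Let `n ≥ 3` and let `S` be a set of transpositions generating `Sₙ`
such that `Cay(Sₙ, S)` is normal (the image of the right regular representation is a
normal subgroup of `Aut(Cay(Sₙ, S))`). Then the subgroup
`λ(Aut(T(S))) = { λ_a : a ∈ Aut(T(S)) }` (with `λ_a : x ↦ a⁻¹ * x`) is a normal
subgroup of `Aut(Cay(Sₙ, S))`. -/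
theorem lrep_normal_in_aut_cayley (n : ℕ) (hn : 3 ≤ n) (S : Set (Equiv.Perm (Fin n)))
    (hS : ∀ s ∈ S, Equiv.Perm.IsSwap s)
    (hgen : Subgroup.closure S = ⊤)
    (hnormal : ((Rrep n).subgroupOf (graphAut (Cay n S))).Normal) :
    ((Lrep n S).subgroupOf (graphAut (Cay n S))).Normal :=
  lrep_normal_in_aut_cayley_general n S hS hnormal
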